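/- Let T be a bounded linear operator on a complex Hilbert space H, let M be a closed T-invariant subspace, and write T as the upper triangular operator matrix with diagonal (A₁, A₂) relative to H = M ⊕ M^⊥, where A₁ = T|_M and A₂ is the compression of T to M^⊥. If σ_w(A₁) ∪ σ_w(A₂) ⊆ σ_w(T), then σ(T) = σ(A₁) ∪ σ(A₂). -/

import Mathlib

open Metric Filter NormedSpace
open scoped Classical ENNReal

variable {X : Type*} [NormedAddCommGroup X] [NormedSpace ℂ X]

/-- The restriction of `T` to an invariant subspace `M`, as an operator on `M`. -/
def restrictCLM (T : X →L[ℂ] X) (M : Submodule ℂ X) (hM : ∀ x ∈ M, T x ∈ M) :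
    M →L[ℂ] M :=
  { toLinearMap := (T : X →ₗ[ℂ] X).restrict hM
    cont := Continuous.subtype_mk (T.continuous.comp continuous_subtype_val) _ }

/-- `T` is Fredholm: closed range, finite-dimensional kernel and cokernel. -/
def IsFredholm (T : X →L[ℂ] X) : Prop :=
  IsClosed (LinearMap.range (T : X →ₗ[ℂ] X) : Set X) ∧
    FiniteDimensional ℂ (LinearMap.ker (T : X →ₗ[ℂ] X)) ∧ FiniteDimensional ℂ (X ⧸ LinearMap.range (T : X →ₗ[ℂ] X))

/-- `T` is Weyl: Fredholm of index zero. -/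
def IsWeyl (T : X →L[ℂ] X) : Prop :=
  IsFredholm T ∧
    Module.finrank ℂ (LinearMap.ker (T : X →ₗ[ℂ] X)) = Module.finrank ℂ (X ⧸ LinearMap.range (T : X →ₗ[ℂ] X))

/-- The Weyl spectrum `σ_w(T) = {lam ∈ σ(T) : T - lam is not Fredholm of index 0}`. -/
def weylSpectrum (T : X →L[ℂ] X) : Set ℂ :=
  {lam : ℂ | lam ∈ spectrum ℂ T ∧ ¬ IsWeyl (T - lam • 1)}

/-- The compression of `T` to the orthogonal complement `Mᗮ` of a closed subspace `M`
of a Hilbert space: `A₂ = P_{Mᗮ} T |_{Mᗮ}`, the second diagonal entry of the upper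
triangular operator matrix of `T` relative to `H = M ⊕ Mᗮ`. -/
noncomputable def compressionPerp {H : Type*} [NormedAddCommGroup H]
    [InnerProductSpace ℂ H] [CompleteSpace H] (T : H →L[ℂ] H) (M : Submodule ℂ H)
    (hM : IsClosed (M : Set H)) : Mᗮ →L[ℂ] Mᗮ :=
  haveI : CompleteSpace M := hM.completeSpace_coe
  (Submodule.orthogonalProjectionOnto Mᗮ).comp (T.comp Mᗮ.subtypeL)

/-! Relative to `H = M ⊕ Mᗮ`, `T - λ` is upper triangular with diagonal `(A₁ - λ, A₂ - λ)`.
If both diagonal entries are bijective then so is `T - λ`, which gives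
`σ(T) ⊆ σ(A₁) ∪ σ(A₂)` unconditionally. Conversely, if `T - λ` is bijective then `A₁ - λ` is
injective and `A₂ - λ` is surjective. For a Fredholm operator of index zero injectivity and
surjectivity are equivalent, so a point of `σ(A₁) ∪ σ(A₂)` outside `σ(T)` would lie in
`σ_w(A₁) ∪ σ_w(A₂) ⊆ σ_w(T) ⊆ σ(T)`. -/

open Function

lemma IsWeyl.injective_iff_surjective {f : X →L[ℂ] X} (hf : IsWeyl f) :
    Injective f ↔ Surjective f := by
  obtain ⟨⟨-, _, _⟩, hrank⟩ := hf
  calc Injective f ↔ LinearMap.ker (f : X →ₗ[ℂ] X) = ⊥ := LinearMap.ker_eq_bot.symm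
    _ ↔ Module.finrank ℂ (LinearMap.ker (f : X →ₗ[ℂ] X)) = 0 := Submodule.finrank_eq_zero.symm
    _ ↔ Module.finrank ℂ (X ⧸ LinearMap.range (f : X →ₗ[ℂ] X)) = 0 := by rw [hrank]
    _ ↔ Subsingleton (X ⧸ LinearMap.range (f : X →ₗ[ℂ] X)) := Module.finrank_zero_iff
    _ ↔ LinearMap.range (f : X →ₗ[ℂ] X) = ⊤ := Submodule.Quotient.subsingleton_iff
    _ ↔ Surjective f := LinearMap.range_eq_top

lemma spectrum.notMem_iff_bijective {𝕜 E : Type*} [NontriviallyNormedField 𝕜]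
    [NormedAddCommGroup E] [NormedSpace 𝕜 E] [CompleteSpace E] {f : E →L[𝕜] E} {lam : 𝕜} :
    lam ∉ spectrum 𝕜 f ↔ Bijective (f - lam • (1 : E →L[𝕜] E)) := by
  rw [spectrum.notMem_iff, ← IsUnit.neg_iff, neg_sub, Algebra.algebraMap_eq_smul_one,
    ContinuousLinearMap.isUnit_iff_bijective]

section WeylSpectrum

variable [CompleteSpace X] {A : X →L[ℂ] X} {lam : ℂ}

lemma mem_weylSpectrum_of_injective (hlam : lam ∈ spectrum ℂ A)
    (hinj : Injective (A - lam • (1 : X →L[ℂ] X))) : lam ∈ weylSpectrum A :=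
  ⟨hlam, fun hW ↦ spectrum.notMem_iff_bijective.2 ⟨hinj, hW.injective_iff_surjective.1 hinj⟩ hlam⟩

lemma mem_weylSpectrum_of_surjective (hlam : lam ∈ spectrum ℂ A)
    (hsurj : Surjective (A - lam • (1 : X →L[ℂ] X))) : lam ∈ weylSpectrum A :=
  ⟨hlam, fun hW ↦ spectrum.notMem_iff_bijective.2 ⟨hW.injective_iff_surjective.2 hsurj, hsurj⟩ hlam⟩

end WeylSpectrum

lemma sub_smul_one_apply_mem {T : X →L[ℂ] X} {M : Submodule ℂ X} (hM : ∀ x ∈ M, T x ∈ M)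
    (lam : ℂ) : ∀ x ∈ M, (T - lam • 1) x ∈ M :=
  fun x hx ↦ M.sub_mem (hM x hx) (M.smul_mem lam hx)

lemma restrictCLM_sub_smul_one (T : X →L[ℂ] X) (M : Submodule ℂ X) (hM : ∀ x ∈ M, T x ∈ M)
    (lam : ℂ) :
    restrictCLM T M hM - lam • 1 =
      restrictCLM (T - lam • 1) M (sub_smul_one_apply_mem hM lam) :=
  rfl

lemma injective_restrictCLM {S : X →L[ℂ] X} {M : Submodule ℂ X} (hM : ∀ x ∈ M, S x ∈ M)
    (hS : Injective S) : Injective (restrictCLM S M hM) :=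
  fun _ _ h ↦ Subtype.ext (hS (congrArg Subtype.val h))

section Compression

variable {H : Type*} [NormedAddCommGroup H] [InnerProductSpace ℂ H] [CompleteSpace H]
  {M : Submodule ℂ H}

lemma mem_of_orthogonalProjectionOnto_orthogonal_eq_zero (hMc : IsClosed (M : Set H)) {z : H}
    (hz : Mᗮ.orthogonalProjectionOnto z = 0) : z ∈ M := by
  have : CompleteSpace M := hMc.completeSpace_coe
  rwa [Submodule.orthogonalProjectionOnto_eq_zero_iff, Submodule.orthogonal_orthogonal] at hz

lemma compressionPerp_sub_smul_one (T : H →L[ℂ] H) (hMc : IsClosed (M : Set H)) (lam : ℂ) :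
    compressionPerp T M hMc - lam • 1 = compressionPerp (T - lam • 1) M hMc := by
  ext y
  simp [compressionPerp, Submodule.orthogonalProjectionOnto_mem_subspace_eq_self]

variable {S : H →L[ℂ] H}

lemma compressionPerp_orthogonalProjectionOnto (hMc : IsClosed (M : Set H))
    (hM : ∀ x ∈ M, S x ∈ M) (z : H) :
    compressionPerp S M hMc (Mᗮ.orthogonalProjectionOnto z) =
      Mᗮ.orthogonalProjectionOnto (S z) := by
  have hzM : z - Mᗮ.orthogonalProjectionOnto z ∈ M :=
    mem_of_orthogonalProjectionOnto_orthogonal_eq_zero hMc <| by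
      rw [map_sub, Submodule.orthogonalProjectionOnto_mem_subspace_eq_self, sub_self]
  have := Submodule.orthogonalProjectionOnto_orthogonal_apply_eq_zero (hM _ hzM)
  rw [map_sub, map_sub, sub_eq_zero] at this
  exact this.symm

lemma surjective_compressionPerp (hMc : IsClosed (M : Set H)) (hM : ∀ x ∈ M, S x ∈ M)
    (hS : Surjective S) : Surjective (compressionPerp S M hMc) := by
  intro v
  obtain ⟨z, hz⟩ := hS v
  refine ⟨Mᗮ.orthogonalProjectionOnto z, ?_⟩
  rw [compressionPerp_orthogonalProjectionOnto hMc hM, hz,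
    Submodule.orthogonalProjectionOnto_mem_subspace_eq_self]

lemma injective_of_injective_restrictCLM_compressionPerp (hMc : IsClosed (M : Set H))
    (hM : ∀ x ∈ M, S x ∈ M) (h₁ : Injective (restrictCLM S M hM))
    (h₂ : Injective (compressionPerp S M hMc)) : Injective S := by
  rw [injective_iff_map_eq_zero] at h₁ h₂ ⊢
  intro z hz
  have hzM : z ∈ M := mem_of_orthogonalProjectionOnto_orthogonal_eq_zero hMc <| h₂ _ <| by
    rw [compressionPerp_orthogonalProjectionOnto hMc hM, hz, map_zero]
  exact congrArg Subtype.val (h₁ ⟨z, hzM⟩ (Subtype.ext hz))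

lemma surjective_of_surjective_restrictCLM_compressionPerp (hMc : IsClosed (M : Set H))
    (hM : ∀ x ∈ M, S x ∈ M) (h₁ : Surjective (restrictCLM S M hM))
    (h₂ : Surjective (compressionPerp S M hMc)) : Surjective S := by
  intro w
  obtain ⟨y, hy⟩ := h₂ (Mᗮ.orthogonalProjectionOnto w)
  have hwy : w - S y ∈ M := mem_of_orthogonalProjectionOnto_orthogonal_eq_zero hMc <| by
    rw [map_sub, ← hy, sub_eq_zero]
    rfl
  obtain ⟨x, hx⟩ := h₁ ⟨w - S y, hwy⟩
  refine ⟨x + y, ?_⟩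
  rw [map_add, show S x = w - S y from congrArg Subtype.val hx, sub_add_cancel]

lemma spectrum_subset_union_restrictCLM_compressionPerp (T : H →L[ℂ] H)
    (hMc : IsClosed (M : Set H)) (hMi : ∀ x ∈ M, T x ∈ M) :
    spectrum ℂ T ⊆ spectrum ℂ (restrictCLM T M hMi) ∪ spectrum ℂ (compressionPerp T M hMc) := by
  have : CompleteSpace M := hMc.completeSpace_coe
  intro lam hlam
  by_contra h
  rw [Set.mem_union, not_or, spectrum.notMem_iff_bijective, spectrum.notMem_iff_bijective,
    restrictCLM_sub_smul_one, compressionPerp_sub_smul_one] at h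
  obtain ⟨⟨h₁inj, h₁surj⟩, ⟨h₂inj, h₂surj⟩⟩ := h
  exact spectrum.notMem_iff_bijective.2
    ⟨injective_of_injective_restrictCLM_compressionPerp hMc _ h₁inj h₂inj,
      surjective_of_surjective_restrictCLM_compressionPerp hMc _ h₁surj h₂surj⟩ hlam

end Compression

/-- Let `T` be an operator on a complex Hilbert space, `M` a closed `T`-invariant
subspace, and let `(A₁, A₂)` be the diagonal of the upper triangular operator matrix
of `T` relative to `H = M ⊕ Mᗮ` (`A₁ = T|_M`, `A₂` the compression of `T` to `Mᗮ`).
If `σ_w(A₁) ∪ σ_w(A₂) ⊆ σ_w(T)` then `σ(T) = σ(A₁) ∪ σ(A₂)`. -/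
theorem spectrum_eq_union_of_weyl_union_subset
    {H : Type*} [NormedAddCommGroup H] [InnerProductSpace ℂ H] [CompleteSpace H]
    (T : H →L[ℂ] H) (M : Submodule ℂ H) (hMc : IsClosed (M : Set H))
    (hMi : ∀ x ∈ M, T x ∈ M)
    (hw : weylSpectrum (restrictCLM T M hMi) ∪ weylSpectrum (compressionPerp T M hMc) ⊆
      weylSpectrum T) :
    spectrum ℂ T =
      spectrum ℂ (restrictCLM T M hMi) ∪ spectrum ℂ (compressionPerp T M hMc) := by
  have : CompleteSpace M := hMc.completeSpace_coe
  refine (spectrum_subset_union_restrictCLM_compressionPerp T hMc hMi).antisymm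
    fun lam hlam ↦ ?_
  by_contra hT
  obtain ⟨hinj, hsurj⟩ := spectrum.notMem_iff_bijective.1 hT
  rcases hlam with h₁ | h₂
  · refine hT (hw (Or.inl (mem_weylSpectrum_of_injective h₁ ?_))).1
    rw [restrictCLM_sub_smul_one]
    exact injective_restrictCLM _ hinj
  · refine hT (hw (Or.inr (mem_weylSpectrum_of_surjective h₂ ?_))).1
    rw [compressionPerp_sub_smul_one]
    exact surjective_compressionPerp hMc (sub_smul_one_apply_mem hMi lam) hsurj
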